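/- On the set S̃• of (finite or infinite) rooted permutations, the local distance d((A₁,≼₁),(A₂,≼₂)) = 2^{−sup{h ∈ ℤ_{>0} : r_h(A₁,≼₁) = r_h(A₂,≼₂)}} (with conventions sup∅ = 0, sup ℤ_{>0} = +∞ and 2^{−∞} = 0) is a metric, and the metric space (S̃•, d) is compact. -/

import Mathlib

open Filter
open scoped Topology Classical

noncomputable section

/-- A (finite or infinite) **rooted permutation**: a pair `(A,≼)` where `A ⊆ ℤ` is an
integer interval containing `0` and `≼` is a total order on `A`.  The order is encoded by a
relation `r` on `ℤ` supported on `A` which is reflexive, antisymmetric, transitive and total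
on `A`. -/
structure RootedPerm where
  A : Set ℤ
  mem0 : 0 ∈ A
  conn : ∀ {x y z : ℤ}, x ∈ A → z ∈ A → x ≤ y → y ≤ z → y ∈ A
  r : ℤ → ℤ → Prop
  supp : ∀ {x y : ℤ}, r x y → x ∈ A ∧ y ∈ A
  refl : ∀ {x : ℤ}, x ∈ A → r x x
  antisymm : ∀ {x y : ℤ}, r x y → r y x → x = y
  trans : ∀ {x y z : ℤ}, r x y → r y z → r x z
  total : ∀ {x y : ℤ}, x ∈ A → y ∈ A → r x y ∨ r y x

/-- The restriction `r_h(A,≼) = (A ∩ [−h,h], ≼)` around the root. -/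
def RootedPerm.restrict (h : ℕ) (P : RootedPerm) : RootedPerm where
  A := P.A ∩ Set.Icc (-(h : ℤ)) (h : ℤ)
  mem0 := ⟨P.mem0, by simp only [Set.mem_Icc]; omega⟩
  conn := by
    intro x y z hx hz hxy hyz
    refine ⟨P.conn hx.1 hz.1 hxy hyz, ?_⟩
    have hx2 := hx.2
    have hz2 := hz.2
    simp only [Set.mem_Icc] at *
    omega
  r := fun x y => P.r x y ∧ x ∈ Set.Icc (-(h : ℤ)) (h : ℤ) ∧ y ∈ Set.Icc (-(h : ℤ)) (h : ℤ)
  supp := by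
    intro x y hxy
    exact ⟨⟨(P.supp hxy.1).1, hxy.2.1⟩, ⟨(P.supp hxy.1).2, hxy.2.2⟩⟩
  refl := fun hx => ⟨P.refl hx.1, hx.2, hx.2⟩
  antisymm := fun hxy hyx => P.antisymm hxy.1 hyx.1
  trans := fun hxy hyz => ⟨P.trans hxy.1 hyz.1, hxy.2.1, hyz.2.2⟩
  total := by
    intro x y hx hy
    rcases P.total hx.1 hy.1 with h' | h'
    · exact Or.inl ⟨h', hx.2, hy.2⟩
    · exact Or.inr ⟨h', hy.2, hx.2⟩

/-- The local distance `d((A₁,≼₁),(A₂,≼₂)) = 2^(−sup{h ≥ 1 : r_h(A₁,≼₁) = r_h(A₂,≼₂)})`,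
with the conventions `sup ∅ = 0`, `sup ℤ_{>0} = +∞`, `2^(−∞) = 0`. -/
def localDist (P Q : RootedPerm) : ℝ :=
  if ∀ h : ℕ, 1 ≤ h → RootedPerm.restrict h P = RootedPerm.restrict h Q then 0
  else (2 : ℝ)⁻¹ ^ sSup {h : ℕ | 1 ≤ h ∧ RootedPerm.restrict h P = RootedPerm.restrict h Q}

end

/-!
`d(P, Q) ≤ 2⁻ᵏ` exactly when `r_k P = r_k Q` (for `k = 0` both sides always hold), so `d` is an
ultrametric, and the `2⁻ᵏ`-balls are the classes of the finitely many possible restrictions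
`r_k`, which makes the space totally bounded. Along a Cauchy sequence every `r_k` is eventually
constant; the limit is read off pointwise: `x` belongs to it, and `x ≼ y` holds in it, iff this
eventually holds along the sequence.
-/

theorem Nat.le_sSup_iff_of_antitone {p : ℕ → Prop} (hp : ∀ ⦃j k⦄, j ≤ k → p k → p j)
    (hp0 : p 0) (hbdd : ∃ n, ¬ p n) (k : ℕ) : k ≤ sSup {h | 1 ≤ h ∧ p h} ↔ p k := by
  obtain ⟨n, hn⟩ := hbdd
  have hS : BddAbove {h | 1 ≤ h ∧ p h} :=
    ⟨n, fun h hh => not_lt.1 fun hnh => hn (hp hnh.le hh.2)⟩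
  refine ⟨fun hk => ?_, fun hk => ?_⟩
  · rcases Nat.eq_zero_or_pos k with rfl | hk0
    · exact hp0
    · have hne : {h | 1 ≤ h ∧ p h}.Nonempty :=
        Set.nonempty_iff_ne_empty.2 fun hemp => by
          simp only [hemp, csSup_empty, Nat.bot_eq_zero] at hk
          omega
      exact hp hk (Nat.sSup_mem hne hS).2
  · rcases Nat.eq_zero_or_pos k with rfl | hk0
    · exact Nat.zero_le _
    · exact le_csSup hS ⟨hk0, hk⟩

attribute [ext] RootedPerm

namespace RootedPerm

variable {P Q : RootedPerm} {h k : ℕ}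

theorem restrict_eq_iff :
    P.restrict h = Q.restrict h ↔
      (∀ x ∈ Set.Icc (-(h : ℤ)) h, x ∈ P.A ↔ x ∈ Q.A) ∧
        ∀ x ∈ Set.Icc (-(h : ℤ)) h, ∀ y ∈ Set.Icc (-(h : ℤ)) h, P.r x y ↔ Q.r x y := by
  simp only [RootedPerm.ext_iff, restrict, Set.ext_iff, funext_iff, eq_iff_iff, Set.mem_inter_iff]
  grind

theorem restrict_eq_of_le (hkh : k ≤ h) (he : P.restrict h = Q.restrict h) :
    P.restrict k = Q.restrict k := by
  have hsub : Set.Icc (-(k : ℤ)) k ⊆ Set.Icc (-(h : ℤ)) h :=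
    Set.Icc_subset_Icc (by omega) (by omega)
  rw [restrict_eq_iff] at he ⊢
  exact ⟨fun x hx => he.1 x (hsub hx), fun x hx y hy => he.2 x (hsub hx) y (hsub hy)⟩

theorem restrict_zero_eq (P Q : RootedPerm) : P.restrict 0 = Q.restrict 0 := by
  refine restrict_eq_iff.2 ⟨fun x hx => ?_, fun x hx y hy => ?_⟩
  · obtain rfl : x = 0 := by simp only [Set.mem_Icc] at hx; omega
    exact iff_of_true P.mem0 Q.mem0
  · obtain rfl : x = 0 := by simp only [Set.mem_Icc] at hx; omega
    obtain rfl : y = 0 := by simp only [Set.mem_Icc] at hy; omega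
    exact iff_of_true (P.refl P.mem0) (Q.refl Q.mem0)

theorem eq_of_forall_restrict_eq (he : ∀ h, P.restrict h = Q.restrict h) : P = Q := by
  ext x
  · exact (restrict_eq_iff.1 (he x.natAbs)).1 x (by simp only [Set.mem_Icc]; omega)
  · rename_i y
    exact (restrict_eq_iff.1 (he (max x.natAbs y.natAbs))).2 x
      (by simp only [Set.mem_Icc]; omega) y (by simp only [Set.mem_Icc]; omega)

theorem localDist_le_iff (k : ℕ) : localDist P Q ≤ 2⁻¹ ^ k ↔ P.restrict k = Q.restrict k := by
  unfold localDist
  split_ifs with hall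
  · exact iff_of_true (by positivity) (k.eq_zero_or_pos.elim (· ▸ restrict_zero_eq P Q) (hall k))
  · push Not at hall
    rw [pow_le_pow_iff_right_of_lt_one₀ (by norm_num) (by norm_num)]
    exact Nat.le_sSup_iff_of_antitone (fun _ _ hjk => restrict_eq_of_le hjk)
      (restrict_zero_eq P Q) (hall.imp fun _ => And.right) k

theorem localDist_self (P : RootedPerm) : localDist P P = 0 := by
  simp [localDist]

theorem localDist_comm (P Q : RootedPerm) : localDist P Q = localDist Q P := by
  simp_rw [localDist, eq_comm (a := P.restrict _)]

theorem localDist_nonneg (P Q : RootedPerm) : 0 ≤ localDist P Q := by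
  unfold localDist
  split_ifs <;> positivity

theorem localDist_eq_zero_or_exists_eq_pow (P Q : RootedPerm) :
    localDist P Q = 0 ∨ ∃ N : ℕ, localDist P Q = 2⁻¹ ^ N := by
  unfold localDist
  split_ifs
  exacts [Or.inl rfl, Or.inr ⟨_, rfl⟩]

theorem eq_of_localDist_eq_zero (h : localDist P Q = 0) : P = Q :=
  eq_of_forall_restrict_eq fun k => (localDist_le_iff k).1 (h ▸ by positivity)

theorem localDist_le_max (P Q R : RootedPerm) :
    localDist P R ≤ max (localDist P Q) (localDist Q R) := by
  have hle (k : ℕ) (hk : max (localDist P Q) (localDist Q R) ≤ 2⁻¹ ^ k) :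
      localDist P R ≤ 2⁻¹ ^ k := by
    rw [max_le_iff, localDist_le_iff, localDist_le_iff] at hk
    exact (localDist_le_iff k).2 (hk.1.trans hk.2)
  have hmax : max (localDist P Q) (localDist Q R) = 0 ∨
      ∃ N : ℕ, max (localDist P Q) (localDist Q R) = 2⁻¹ ^ N := by
    rcases max_choice (localDist P Q) (localDist Q R) with h | h <;> rw [h]
    exacts [localDist_eq_zero_or_exists_eq_pow P Q, localDist_eq_zero_or_exists_eq_pow Q R]
  rcases hmax with h0 | ⟨N, hN⟩
  · obtain rfl : P = R :=
      eq_of_forall_restrict_eq fun k => (localDist_le_iff k).1 (hle k (h0 ▸ by positivity))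
    rw [localDist_self, h0]
  · exact hN ▸ hle N hN.le

noncomputable instance : MetricSpace RootedPerm where
  dist := localDist
  dist_self := localDist_self
  dist_comm := localDist_comm
  dist_triangle P Q R := (localDist_le_max P Q R).trans
    (max_le_add_of_nonneg (localDist_nonneg P Q) (localDist_nonneg Q R))
  eq_of_dist_eq_zero := eq_of_localDist_eq_zero

theorem dist_eq_localDist (P Q : RootedPerm) : dist P Q = localDist P Q := rfl

theorem exists_dist_lt_of_restrict_eq {ε : ℝ} (hε : 0 < ε) :
    ∃ k : ℕ, ∀ P Q : RootedPerm, P.restrict k = Q.restrict k → dist P Q < ε := by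
  obtain ⟨k, hk⟩ := exists_pow_lt_of_lt_one hε (by norm_num : (2 : ℝ)⁻¹ < 1)
  exact ⟨k, fun P Q he => ((localDist_le_iff k).2 he).trans_lt hk⟩

theorem totallyBounded_univ : TotallyBounded (Set.univ : Set RootedPerm) := by
  refine Metric.totallyBounded_of_finite_discretization fun ε hε => ?_
  obtain ⟨k, hk⟩ := exists_dist_lt_of_restrict_eq hε
  let I := Set.Icc (-(k : ℤ)) k
  refine ⟨(I → Prop) × (I → I → Prop), inferInstance,
    fun P => (fun x => ↑x ∈ P.1.A, fun x y => P.1.r x y),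
    fun P Q hPQ => hk _ _ (restrict_eq_iff.2 ?_)⟩
  simpa only [Prod.mk.injEq, funext_iff, eq_iff_iff, Subtype.forall] using hPQ

theorem tendsto_of_forall_eventually_restrict_eq {ι : Type*} {l : Filter ι}
    {u : ι → RootedPerm} {L : RootedPerm}
    (hu : ∀ k, ∀ᶠ i in l, (u i).restrict k = L.restrict k) :
    Tendsto u l (𝓝 L) :=
  Metric.tendsto_nhds.2 fun _ hε =>
    let ⟨k, hk⟩ := exists_dist_lt_of_restrict_eq hε
    (hu k).mono fun _ hi => hk _ _ hi

theorem _root_.CauchySeq.exists_eventually_restrict_eq {β : Type*} [Nonempty β]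
    [SemilatticeSup β] {u : β → RootedPerm} (hu : CauchySeq u) (h : ℕ) :
    ∃ N, ∀ᶠ n in atTop, (u n).restrict h = (u N).restrict h := by
  obtain ⟨N, hN⟩ := Metric.cauchySeq_iff'.1 hu _ (pow_pos (by norm_num : (0 : ℝ) < 2⁻¹) h)
  exact ⟨N, eventually_atTop.2 ⟨N, fun n hn => (localDist_le_iff h).1 (hN n hn).le⟩⟩

section EventualLimit

variable {ι : Type*} {l : Filter ι} {u : ι → RootedPerm}

theorem eventually_r_or_eventually_not_r
    (hu : ∀ h, ∃ j, ∀ᶠ i in l, (u i).restrict h = (u j).restrict h) (x y : ℤ) :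
    (∀ᶠ i in l, (u i).r x y) ∨ ∀ᶠ i in l, ¬ (u i).r x y := by
  obtain ⟨j, hj⟩ := hu (max x.natAbs y.natAbs)
  have hxy : ∀ᶠ i in l, (u i).r x y ↔ (u j).r x y := hj.mono fun i hi =>
    (restrict_eq_iff.1 hi).2 x (by simp only [Set.mem_Icc]; omega) y
      (by simp only [Set.mem_Icc]; omega)
  by_cases hr : (u j).r x y
  · exact Or.inl (hxy.mono fun i hi => hi.2 hr)
  · exact Or.inr (hxy.mono fun i hi => mt hi.1 hr)

def eventualLimit (l : Filter ι) [l.NeBot] (u : ι → RootedPerm)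
    (hr : ∀ x y, (∀ᶠ i in l, (u i).r x y) ∨ ∀ᶠ i in l, ¬ (u i).r x y) : RootedPerm where
  A := {x | ∀ᶠ i in l, x ∈ (u i).A}
  mem0 := .of_forall fun i => (u i).mem0
  conn hx hz hxy hyz := by
    filter_upwards [hx, hz] with i hxi hzi using (u i).conn hxi hzi hxy hyz
  r x y := ∀ᶠ i in l, (u i).r x y
  supp hxy := ⟨hxy.mono fun i hi => ((u i).supp hi).1, hxy.mono fun i hi => ((u i).supp hi).2⟩
  refl hx := hx.mono fun i hi => (u i).refl hi
  antisymm hxy hyx :=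
    let ⟨i, hi⟩ := (hxy.and hyx).exists
    (u i).antisymm hi.1 hi.2
  trans hxy hyz := by filter_upwards [hxy, hyz] with i hi hi' using (u i).trans hi hi'
  total {x y} hx hy := (hr x y).imp_right fun hxy => by
    filter_upwards [hx, hy, hxy] with i hxi hyi hi using ((u i).total hxi hyi).resolve_left hi

theorem restrict_eventualLimit [l.NeBot] {hr} {h : ℕ} {j : ι}
    (hj : ∀ᶠ i in l, (u i).restrict h = (u j).restrict h) :
    (eventualLimit l u hr).restrict h = (u j).restrict h := by
  refine restrict_eq_iff.2 ⟨fun x hx => ?_, fun x hx y hy => ?_⟩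
  · exact (eventually_congr (hj.mono fun i hi => (restrict_eq_iff.1 hi).1 x hx)).trans
      eventually_const
  · exact (eventually_congr (hj.mono fun i hi => (restrict_eq_iff.1 hi).2 x hx y hy)).trans
      eventually_const

end EventualLimit

instance : CompleteSpace RootedPerm := by
  refine Metric.complete_of_cauchySeq_tendsto fun u hu => ?_
  have hstable := hu.exists_eventually_restrict_eq
  refine ⟨eventualLimit atTop u (eventually_r_or_eventually_not_r hstable),
    tendsto_of_forall_eventually_restrict_eq fun h => ?_⟩
  obtain ⟨N, hN⟩ := hstable h
  rw [restrict_eventualLimit hN]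
  exact hN

instance : CompactSpace RootedPerm :=
  ⟨isCompact_iff_totallyBounded_isComplete.2 ⟨totallyBounded_univ, isComplete_univ⟩⟩

end RootedPerm

/-- **Theorem 2.12 (and preceding discussion).** The local distance `d` is a metric on the
set of (finite or infinite) rooted permutations, and the resulting metric space is compact. -/
theorem localDist_metricSpace_compact :
    ∃ m : MetricSpace RootedPerm,
      (∀ P Q : RootedPerm, m.toDist.dist P Q = localDist P Q) ∧
      @CompactSpace RootedPerm m.toUniformSpace.toTopologicalSpace :=
  ⟨inferInstance, RootedPerm.dist_eq_localDist, inferInstance⟩
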